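/- arXiv:2512.24741 — 2 statements merged into one kernel-verified Lean document; each statement's English description precedes it below -/
import Mathlib

section
/- Let E be an equivalence relation on X with countable classes and ρ : E → ℝ>0 a cocycle. Suppose every E-class C satisfies Σ_{z ∈ C} ρ(z,x) < ∞ for some (equivalently, every) x ∈ C. Then the set A := { x ∈ X : ∀ y ∈ [x]_E, ρ(y,x) ≤ 1 } meets every E-class in a finite nonempty set. -/
theorem stmt3 {X : Type*} (E : X → X → Prop) (hE : Equivalence E)
    (hcount : ∀ x : X, {y | E y x}.Countable)
    (ρ : X → X → ℝ)
    (hpos : ∀ x y, E x y → 0 < ρ x y)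
    (hcoc : ∀ x y z : X, E x y → E y z → E x z →
      ρ z y * ρ y x = ρ z x)
    (hfin : ∀ x : X, (∑' z : {y | E y x}, ENNReal.ofReal (ρ z.1 x)) < ⊤) :
    ∀ x : X,
      ({y | E y x} ∩ {a | ∀ b, E b a → ρ b a ≤ 1}).Finite ∧
      ({y | E y x} ∩ {a | ∀ b, E b a → ρ b a ≤ 1}).Nonempty := by
  intro x
  have hxx : E x x := hE.refl x
  set S : Set {y | E y x} := {z | ρ x x ≤ ρ z.1 x} with hS
  have hSfin : S.Finite := by
    have h := ENNReal.finite_const_le_of_tsum_ne_top (hfin x).ne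
      (ε := ENNReal.ofReal (ρ x x)) (by
        simp [ENNReal.ofReal_eq_zero, not_le, hpos x x hxx])
    refine h.subset ?_
    intro z hz
    exact ENNReal.ofReal_le_ofReal hz
  have hSne : S.Nonempty := ⟨⟨x, hxx⟩, show ρ x x ≤ ρ x x from le_refl _⟩
  obtain ⟨a, haS, hmax⟩ := Set.exists_max_image S (fun z => ρ z.1 x) hSfin hSne
  have hglob : ∀ b, E b x → ρ b x ≤ ρ a.1 x := by
    intro b hb
    by_cases hbS : ρ x x ≤ ρ b x
    · exact hmax ⟨b, hb⟩ hbS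
    · exact le_trans (le_of_not_ge hbS) haS
  have haA : a.1 ∈ {a | ∀ b, E b a → ρ b a ≤ 1} := by
    intro b hba
    have hbx : E b x := hE.trans hba a.2
    have hx_a : E x a.1 := hE.symm a.2
    have ha_b : E a.1 b := hE.symm hba
    have hx_b : E x b := hE.symm hbx
    have hc := hcoc x a.1 b hx_a ha_b hx_b
    have hpa : 0 < ρ a.1 x := hpos a.1 x a.2
    have : ρ b a.1 * ρ a.1 x ≤ 1 * ρ a.1 x := by
      rw [hc, one_mul]; exact hglob b hbx
    exact le_of_mul_le_mul_right this hpa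
  constructor
  · refine (hSfin.image Subtype.val).subset ?_
    rintro y ⟨hy1, hy2⟩
    have hxy : E x y := hE.symm hy1
    have hc := hcoc x y x hxy hy1 hxx
    have hpy : 0 < ρ y x := hpos y x hy1
    have hle : ρ x y ≤ 1 := hy2 x hxy
    have : ρ x x ≤ ρ y x := by
      calc ρ x x = ρ x y * ρ y x := hc.symm
        _ ≤ 1 * ρ y x := by
            exact mul_le_mul_of_nonneg_right hle hpy.le
        _ = ρ y x := one_mul _
    exact ⟨⟨y, hy1⟩, this, rfl⟩
  · exact ⟨a.1, a.2, haA⟩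
end

section
/- Let f : X → X be an acyclic function on a set X. Then for each x ∈ X, the sequence (fⁿ(x))_{n∈ℕ} is a geodesic ray through the graph T_f, and any two such rays starting from points in the same T_f-component are tail-equivalent; hence each connected component of T_f has a distinguished end (the forward f-end). -/
/-- A geodesic ray through a graph `T`. -/
def IsGeodRay {V : Type*} (T : SimpleGraph V) (x : ℕ → V) : Prop :=
  ∀ n m : ℕ, T.dist (x n) (x m) = Nat.dist n m

/-- Tail equivalence of rays. -/
def TailEquiv {V : Type*} (x y : ℕ → V) : Prop :=
  ∃ N M : ℕ, ∀ n : ℕ, x (n + N) = y (n + M)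

section Aux

variable {X : Type*} (f : X → X)

/-- Exponent injectivity from acyclicity. -/
lemma iter_inj (hac : ∀ (x : X) (n : ℕ), 1 ≤ n → f^[n] x ≠ x)
    {z : X} {a b : ℕ} (h : f^[a] z = f^[b] z) : a = b := by
  wlog hab : a ≤ b generalizing a b
  · exact (this h.symm (le_of_not_ge hab)).symm
  by_contra hne
  have h1 : 1 ≤ b - a := by omega
  apply hac (f^[a] z) (b - a) h1
  calc f^[b - a] (f^[a] z) = f^[b - a + a] z := (Function.iterate_add_apply f _ _ z).symm
    _ = f^[b] z := by rw [Nat.sub_add_cancel hab]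
    _ = f^[a] z := h.symm

/-- Step lemma: an edge shifts the potential by exactly ±1. -/
lemma adj_step {x u u' : X} {a b : ℕ}
    (hadj : (SimpleGraph.fromRel (fun x y => f x = y)).Adj u u')
    (h : f^[a] u = f^[b] x) :
    ∃ a' b' : ℕ, f^[a'] u' = f^[b'] x ∧
      (((b' : ℤ) - a' = (b : ℤ) - a + 1) ∨ ((b' : ℤ) - a' = (b : ℤ) - a - 1)) := by
  rw [SimpleGraph.fromRel_adj] at hadj
  rcases hadj.2 with hfu | hfu'
  · -- f u = u'
    rcases a with _ | k
    · refine ⟨0, b + 1, ?_, Or.inl ?_⟩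
      · simp only [Function.iterate_zero_apply] at h ⊢
        rw [← hfu, h, ← Function.iterate_succ_apply' f b x]
      · push_cast; ring
    · refine ⟨k, b, ?_, Or.inl ?_⟩
      · rw [← hfu, ← Function.iterate_succ_apply f k u]; exact h
      · push_cast; ring
  · -- f u' = u
    refine ⟨a + 1, b, ?_, Or.inr ?_⟩
    · rw [Function.iterate_succ_apply f a u', hfu']; exact h
    · push_cast; ring

/-- Walk potential lemma. -/
lemma walk_potential (hac : ∀ (x : X) (n : ℕ), 1 ≤ n → f^[n] x ≠ x)
    {x u v : X}
    (p : (SimpleGraph.fromRel (fun x y => f x = y)).Walk u v)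
    {a b c d : ℕ} (hu : f^[a] u = f^[b] x) (hv : f^[c] v = f^[d] x) :
    |((b : ℤ) - a) - ((d : ℤ) - c)| ≤ p.length := by
  induction p generalizing a b with
  | nil =>
    have h1 := congrArg (f^[c]) hu
    have h2 := congrArg (f^[a]) hv
    rw [← Function.iterate_add_apply, ← Function.iterate_add_apply] at h1 h2
    rw [add_comm c a] at h1
    have heq := iter_inj f hac (h1.symm.trans h2)
    have hz : ((b : ℤ) - a) - ((d : ℤ) - c) = 0 := by omega
    simp [hz]
  | @cons u u' v hadj q ih =>
    obtain ⟨a', b', hu', hshift⟩ := adj_step f hadj hu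
    have hq := ih hu' hv
    simp only [SimpleGraph.Walk.length_cons]
    push_cast
    rw [abs_le] at hq ⊢
    rcases hshift with hs | hs <;> omega

/-- A walk realising the forward orbit. -/
lemma orbit_walk (hfix : ∀ z : X, f z ≠ z) (z : X) (k : ℕ) :
    ∃ p : (SimpleGraph.fromRel (fun x y => f x = y)).Walk z (f^[k] z),
      p.length = k := by
  induction k with
  | zero => exact ⟨SimpleGraph.Walk.nil, rfl⟩
  | succ k ih =>
    obtain ⟨p, hp⟩ := ih
    have hadj : (SimpleGraph.fromRel (fun x y => f x = y)).Adj (f^[k] z) (f^[k+1] z) := by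
      rw [SimpleGraph.fromRel_adj, Function.iterate_succ_apply' f k z]
      exact ⟨fun h => hfix _ h.symm, Or.inl rfl⟩
    exact ⟨p.concat hadj, by rw [SimpleGraph.Walk.length_concat, hp]⟩

/-- Joinability of orbits along a walk. -/
lemma walk_joins {u y : X}
    (p : (SimpleGraph.fromRel (fun x y => f x = y)).Walk u y) :
    ∃ n m : ℕ, f^[n] u = f^[m] y := by
  induction p with
  | nil => exact ⟨0, 0, rfl⟩
  | @cons u u' v hadj q ih =>
    obtain ⟨n, m, h⟩ := ih
    rw [SimpleGraph.fromRel_adj] at hadj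
    rcases hadj.2 with hfu | hfu'
    · exact ⟨n + 1, m, by rw [Function.iterate_succ_apply f n u, hfu]; exact h⟩
    · rcases n with _ | k
      · refine ⟨0, m + 1, ?_⟩
        simp only [Function.iterate_zero_apply] at h
        simp only [Function.iterate_zero_apply]
        rw [← hfu', h, ← Function.iterate_succ_apply' f m v]
      · refine ⟨k, m, ?_⟩
        rw [← hfu', ← Function.iterate_succ_apply f k u']
        exact h

end Aux

theorem stmt14 {X : Type*} (f : X → X)
    (hac : ∀ (x : X) (n : ℕ), 1 ≤ n → f^[n] x ≠ x) :
    (∀ x : X, IsGeodRay (SimpleGraph.fromRel (fun x y => f x = y))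
        (fun n => f^[n] x)) ∧
      ∀ x y : X, (SimpleGraph.fromRel (fun x y => f x = y)).Reachable x y →
        TailEquiv (fun n => f^[n] x) (fun n => f^[n] y) := by
  have hfix : ∀ z : X, f z ≠ z := fun z => hac z 1 le_rfl
  set T := SimpleGraph.fromRel (fun x y : X => f x = y) with hT
  have hwalk : ∀ (n m : ℕ), n ≤ m → ∀ x : X,
      ∃ p : T.Walk (f^[n] x) (f^[m] x), p.length = m - n := by
    intro n m h x
    obtain ⟨p, hp⟩ := orbit_walk f hfix (f^[n] x) (m - n)
    have he : f^[m - n] (f^[n] x) = f^[m] x := by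
      rw [← Function.iterate_add_apply, Nat.sub_add_cancel h]
    exact ⟨p.copy rfl he, by rw [SimpleGraph.Walk.length_copy, hp]⟩
  constructor
  · intro x n m
    have hub : T.dist (f^[n] x) (f^[m] x) ≤ Nat.dist n m := by
      rcases le_total n m with h | h
      · obtain ⟨p, hp⟩ := hwalk n m h x
        calc T.dist (f^[n] x) (f^[m] x) ≤ p.length := SimpleGraph.dist_le p
          _ = m - n := hp
          _ = Nat.dist n m := (Nat.dist_eq_sub_of_le h).symm
      · obtain ⟨p, hp⟩ := hwalk m n h x
        calc T.dist (f^[n] x) (f^[m] x) = T.dist (f^[m] x) (f^[n] x) :=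
              SimpleGraph.dist_comm
          _ ≤ p.length := SimpleGraph.dist_le p
          _ = n - m := hp
          _ = Nat.dist n m := by rw [Nat.dist_comm, Nat.dist_eq_sub_of_le h]
    have hre : T.Reachable (f^[n] x) (f^[m] x) := by
      rcases le_total n m with h | h
      · obtain ⟨p, _⟩ := hwalk n m h x
        exact p.reachable
      · obtain ⟨p, _⟩ := hwalk m n h x
        exact p.reachable.symm
    obtain ⟨p, hp⟩ := hre.exists_walk_length_eq_dist
    have hlow := walk_potential f hac p
      (a := 0) (b := n) (c := 0) (d := m) rfl rfl
    rw [hp] at hlow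
    have hdist : ((Nat.dist n m : ℕ) : ℤ) = |((n : ℤ) - 0) - ((m : ℤ) - 0)| := by
      rcases le_total n m with h | h
      · rw [Nat.dist_eq_sub_of_le h]
        have : ((n : ℤ) - 0) - ((m : ℤ) - 0) = -(((m - n : ℕ) : ℤ)) := by
          push_cast [h]; ring
        rw [this, abs_neg, abs_of_nonneg (by positivity)]
      · rw [Nat.dist_comm, Nat.dist_eq_sub_of_le h]
        have : ((n : ℤ) - 0) - ((m : ℤ) - 0) = ((n - m : ℕ) : ℤ) := by
          push_cast [h]; ring
        rw [this, abs_of_nonneg (by positivity)]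
    have hcast : (Nat.dist n m : ℤ) ≤ (T.dist (f^[n] x) (f^[m] x) : ℤ) := by
      rw [hdist]; exact_mod_cast hlow
    have hlb : Nat.dist n m ≤ T.dist (f^[n] x) (f^[m] x) := by exact_mod_cast hcast
    exact le_antisymm hub hlb
  · intro x y hre
    obtain ⟨p⟩ := hre
    obtain ⟨N, M, h⟩ := walk_joins f p
    exact ⟨N, M, fun k => by
      simp only
      rw [Function.iterate_add_apply, h, ← Function.iterate_add_apply]⟩
end
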